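/- arXiv:1906.10571 — 6 statements merged into one kernel-verified Lean document; each statement's English description precedes it below -/
import Mathlib

section
/- The map f : c ↦ Q*(c) assigning to each cost the unique fixed point of its Bellman operator is injective. In fact, ‖c̃ − c‖_∞ ≤ (1+β) ‖Q*(c̃) − Q*(c)‖_∞, so distinct costs yield distinct fixed points. -/
/-!
Solving the fixed-point equation for the cost gives `c = Q*(c) - β · T Q*(c)`, where
`T Q (i, a) = ∑ⱼ p(i, j, a) · min_b Q(j, b)`. Taking a minimum over actions and averaging against a
probability vector are both nonexpansive in the sup norm, hence so is `T`, and the triangle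
inequality gives `‖c̃ - c‖ ≤ (1 + β) ‖Q*(c̃) - Q*(c)‖`. Injectivity follows.
-/

open Finset

lemma abs_ciInf_sub_ciInf_le {ι : Type*} [Finite ι] [Nonempty ι] {g h : ι → ℝ} {M : ℝ}
    (hM : ∀ i, |g i - h i| ≤ M) : |(⨅ i, g i) - ⨅ i, h i| ≤ M := by
  have ciInf_le_ciInf_add {g h : ι → ℝ} (hM : ∀ i, g i - h i ≤ M) : ⨅ i, g i ≤ (⨅ i, h i) + M := by
    have : ∀ i, (⨅ i, g i) - M ≤ h i := fun i => by
      linarith [ciInf_le (Finite.bddBelow_range g) i, hM i]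
    linarith [le_ciInf this]
  rw [abs_sub_le_iff]
  constructor
  · linarith [ciInf_le_ciInf_add fun i => (abs_sub_le_iff.1 (hM i)).1]
  · linarith [ciInf_le_ciInf_add fun i => (abs_sub_le_iff.1 (hM i)).2]

lemma abs_sum_mul_le_of_abs_le {ι : Type*} [Fintype ι] {w x : ι → ℝ} {M : ℝ}
    (hw0 : ∀ i, 0 ≤ w i) (hw1 : ∑ i, w i = 1) (hx : ∀ i, |x i| ≤ M) :
    |∑ i, w i * x i| ≤ M :=
  calc |∑ i, w i * x i| ≤ ∑ i, |w i * x i| := abs_sum_le_sum_abs _ _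
    _ ≤ ∑ i, w i * M := sum_le_sum fun i _ => by
        rw [abs_mul, abs_of_nonneg (hw0 i)]
        exact mul_le_mul_of_nonneg_left (hx i) (hw0 i)
    _ = M := by rw [← sum_mul, hw1, one_mul]

section ExpectedNextValue

variable {S A : Type*} [Fintype S] [Fintype A]

noncomputable def expectedNextValue (p : S → S → A → ℝ) (Q : S × A → ℝ) : S × A → ℝ :=
  fun x => ∑ j, p x.1 j x.2 * ⨅ b, Q (j, b)

lemma norm_expectedNextValue_sub_le [Nonempty A] {p : S → S → A → ℝ}
    (hp0 : ∀ i j a, 0 ≤ p i j a) (hp1 : ∀ i a, ∑ j, p i j a = 1) (Q Q' : S × A → ℝ) :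
    ‖expectedNextValue p Q - expectedNextValue p Q'‖ ≤ ‖Q - Q'‖ := by
  refine (pi_norm_le_iff_of_nonneg (norm_nonneg _)).2 fun ⟨i, a⟩ => ?_
  simp only [Real.norm_eq_abs, Pi.sub_apply, expectedNextValue, ← sum_sub_distrib, ← mul_sub]
  refine abs_sum_mul_le_of_abs_le (hp0 i · a) (hp1 i a) fun j => abs_ciInf_sub_ciInf_le fun b => ?_
  simpa using norm_le_pi_norm (Q - Q') (j, b)

end ExpectedNextValue

theorem cost_to_fixed_point_injective_general {S A : Type*} [Fintype S] [Fintype A] [Nonempty A]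
    (p : S → S → A → ℝ) (hp0 : ∀ i j a, 0 ≤ p i j a) (hp1 : ∀ i a, ∑ j, p i j a = 1)
    (β : ℝ) (hβ0 : 0 < β)
    (f : (S × A → ℝ) → (S × A → ℝ))
    (hf : ∀ c : S × A → ℝ, ∀ i a, f c (i, a) = c (i, a) + β * ∑ j, p i j a * (⨅ b, f c (j, b))) :
    Function.Injective f ∧
      ∀ c ctil : S × A → ℝ, ‖ctil - c‖ ≤ (1 + β) * ‖f ctil - f c‖ := by
  set T := expectedNextValue p
  have cost_diff (c ctil : S × A → ℝ) : ctil - c = (f ctil - f c) - β • (T (f ctil) - T (f c)) := by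
    ext ⟨i, a⟩
    simp only [Pi.sub_apply, Pi.smul_apply, smul_eq_mul, hf _ i a, T, expectedNextValue]
    ring
  have bound (c ctil : S × A → ℝ) : ‖ctil - c‖ ≤ (1 + β) * ‖f ctil - f c‖ :=
    calc ‖ctil - c‖ ≤ ‖f ctil - f c‖ + β * ‖T (f ctil) - T (f c)‖ := by
          rw [cost_diff]
          exact (norm_sub_le _ _).trans_eq (by rw [norm_smul, Real.norm_of_nonneg hβ0.le])
      _ ≤ ‖f ctil - f c‖ + β * ‖f ctil - f c‖ := by
          gcongr
          exact norm_expectedNextValue_sub_le hp0 hp1 _ _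
      _ = (1 + β) * ‖f ctil - f c‖ := by ring
  refine ⟨fun c ctil h => ?_, bound⟩
  have := bound ctil c
  rw [h, sub_self, norm_zero, mul_zero] at this
  exact sub_eq_zero.1 (norm_le_zero_iff.1 this)

theorem cost_to_fixed_point_injective {S A : Type*} [Fintype S] [Fintype A] [Nonempty S] [Nonempty A]
    (p : S → S → A → ℝ) (hp0 : ∀ i j a, 0 ≤ p i j a) (hp1 : ∀ i a, ∑ j, p i j a = 1)
    (β : ℝ) (hβ0 : 0 < β) (hβ1 : β < 1)
    (f : (S × A → ℝ) → (S × A → ℝ))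
    (hf : ∀ c : S × A → ℝ, ∀ i a, f c (i, a) = c (i, a) + β * ∑ j, p i j a * (⨅ b, f c (j, b))) :
    Function.Injective f ∧
      ∀ c ctil : S × A → ℝ, ‖ctil - c‖ ≤ (1 + β) * ‖f ctil - f c‖ :=
  cost_to_fixed_point_injective_general p hp0 hp1 β hβ0 f hf
end

section
/- For any two distinct policies w₁ ≠ w₂ with V_{w₁} and V_{w₂} both nonempty, the distance between the sets V_{w₁} and V_{w₂} is zero: inf { ‖Q₁ − Q₂‖_∞ | Q₁ ∈ V_{w₁}, Q₂ ∈ V_{w₂} } = 0. -/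
theorem Vw_distance_zero {S A : Type*} [Fintype S] [Fintype A] [Nonempty S] [Nonempty A]
    (w₁ w₂ : S → A) (hw : w₁ ≠ w₂)
    (h₁ : {Q : S × A → ℝ | ∀ i : S, ∀ a : A, a ≠ w₁ i → Q (i, w₁ i) < Q (i, a)}.Nonempty)
    (h₂ : {Q : S × A → ℝ | ∀ i : S, ∀ a : A, a ≠ w₂ i → Q (i, w₂ i) < Q (i, a)}.Nonempty) :
    sInf {r : ℝ | ∃ Q₁ ∈ {Q : S × A → ℝ | ∀ i : S, ∀ a : A, a ≠ w₁ i → Q (i, w₁ i) < Q (i, a)},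
      ∃ Q₂ ∈ {Q : S × A → ℝ | ∀ i : S, ∀ a : A, a ≠ w₂ i → Q (i, w₂ i) < Q (i, a)},
        r = ‖Q₁ - Q₂‖} = 0 := by
  classical
  set T : Set ℝ := {r : ℝ | ∃ Q₁ ∈ {Q : S × A → ℝ | ∀ i : S, ∀ a : A, a ≠ w₁ i → Q (i, w₁ i) < Q (i, a)},
      ∃ Q₂ ∈ {Q : S × A → ℝ | ∀ i : S, ∀ a : A, a ≠ w₂ i → Q (i, w₂ i) < Q (i, a)},
        r = ‖Q₁ - Q₂‖} with hT
  have hnonneg : ∀ r ∈ T, (0:ℝ) ≤ r := by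
    rintro r ⟨Q₁, -, Q₂, -, rfl⟩
    exact norm_nonneg _
  have hbdd : BddBelow T := ⟨0, hnonneg⟩
  -- For each ε > 0, exhibit an element of T that is ≤ ε
  have key : ∀ ε : ℝ, 0 < ε → ∃ r ∈ T, r ≤ ε := by
    intro ε hε
    set Q₀ : S × A → ℝ := fun p => if p.2 = w₁ p.1 ∨ p.2 = w₂ p.1 then 0 else 1 with hQ₀
    set Q₁ : S × A → ℝ := fun p => Q₀ p - (if p.2 = w₁ p.1 then ε else 0) with hQ₁
    set Q₂ : S × A → ℝ := fun p => Q₀ p - (if p.2 = w₂ p.1 then ε else 0) with hQ₂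
    have hQ₀nonneg : ∀ p, 0 ≤ Q₀ p := by
      intro p; simp only [hQ₀]; split <;> norm_num
    have m₁ : Q₁ ∈ {Q : S × A → ℝ | ∀ i : S, ∀ a : A, a ≠ w₁ i → Q (i, w₁ i) < Q (i, a)} := by
      intro i a ha
      have e1 : Q₁ (i, w₁ i) = -ε := by simp [hQ₁, hQ₀]
      have e2 : Q₁ (i, a) = Q₀ (i, a) := by simp [hQ₁, ha]
      rw [e1, e2]
      have := hQ₀nonneg (i, a)
      linarith
    have m₂ : Q₂ ∈ {Q : S × A → ℝ | ∀ i : S, ∀ a : A, a ≠ w₂ i → Q (i, w₂ i) < Q (i, a)} := by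
      intro i a ha
      have e1 : Q₂ (i, w₂ i) = -ε := by simp [hQ₂, hQ₀]
      have e2 : Q₂ (i, a) = Q₀ (i, a) := by simp [hQ₂, ha]
      rw [e1, e2]
      have := hQ₀nonneg (i, a)
      linarith
    refine ⟨‖Q₁ - Q₂‖, ⟨Q₁, m₁, Q₂, m₂, rfl⟩, ?_⟩
    apply pi_norm_le_iff_of_nonneg hε.le |>.2
    intro p
    simp only [Pi.sub_apply, hQ₁, hQ₂, Real.norm_eq_abs]
    have : Q₀ p - (if p.2 = w₁ p.1 then ε else 0) - (Q₀ p - (if p.2 = w₂ p.1 then ε else 0))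
        = (if p.2 = w₂ p.1 then ε else 0) - (if p.2 = w₁ p.1 then ε else 0) := by ring
    rw [this]
    rw [abs_le]
    rcases em (p.2 = w₁ p.1) with h1 | h1 <;> rcases em (p.2 = w₂ p.1) with h2 | h2 <;>
      simp only [h1, h2, if_pos, if_neg, if_true, if_false] <;> constructor <;>
        first | (split_ifs <;> linarith) | linarith
  have hTne : T.Nonempty := by
    obtain ⟨r, hr, -⟩ := key 1 one_pos
    exact ⟨r, hr⟩
  refine le_antisymm ?_ (le_csInf hTne hnonneg)
  refine le_of_forall_pos_le_add ?_
  intro ε hε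
  obtain ⟨r, hrT, hrε⟩ := key ε hε
  calc sInf T ≤ r := csInf_le hbdd hrT
    _ ≤ 0 + ε := by linarith
end

section
/- Robust region: Let c be a true cost with Bellman fixed point Q* ∈ V_{w*}, let w† ≠ w* be a target policy, and let D_{Q*}(w†) = inf{‖Q − Q*‖_∞ : Q ∈ V_{w†}}. If a falsified cost c̃ satisfies ‖c̃ − c‖_∞ < (1−β) · D_{Q*}(w†), then the fixed point Q̃* of the Bellman operator with cost c̃ does not lie in V_{w†}. -/
open Finset

lemma inf_sub_inf_abs_le {A : Type*} [Fintype A] [Nonempty A] (f g : A → ℝ) (M : ℝ)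
    (h : ∀ b, |f b - g b| ≤ M) : |(⨅ b, f b) - ⨅ b, g b| ≤ M := by
  obtain ⟨b1, hb1⟩ := exists_eq_ciInf_of_finite (f := f)
  obtain ⟨b2, hb2⟩ := exists_eq_ciInf_of_finite (f := g)
  have h1 : (⨅ b, f b) ≤ f b2 := ciInf_le (Finite.bddBelow_range f) b2
  have h2 : (⨅ b, g b) ≤ g b1 := ciInf_le (Finite.bddBelow_range g) b1
  have e1 := abs_le.1 (h b2)
  have e2 := abs_le.1 (h b1)
  rw [abs_le]
  constructor <;> [skip; skip] <;> [linarith [hb2, hb1]; linarith [hb2, hb1]]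

theorem robust_region {S A : Type*} [Fintype S] [Fintype A] [Nonempty S] [Nonempty A]
    (p : S → S → A → ℝ) (hp0 : ∀ i j a, 0 ≤ p i j a) (hp1 : ∀ i a, ∑ j, p i j a = 1)
    (β : ℝ) (hβ0 : 0 < β) (hβ1 : β < 1)
    (c ctil : S × A → ℝ) (wstar wdag : S → A) (hw : wstar ≠ wdag)
    (Qstar Qtil : S × A → ℝ)
    (hQ : ∀ i a, Qstar (i, a) = c (i, a) + β * ∑ j, p i j a * (⨅ b, Qstar (j, b)))
    (hQt : ∀ i a, Qtil (i, a) = ctil (i, a) + β * ∑ j, p i j a * (⨅ b, Qtil (j, b)))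
    (hQstar : Qstar ∈ {Q : S × A → ℝ | ∀ i : S, ∀ a : A, a ≠ wstar i → Q (i, wstar i) < Q (i, a)})
    (hsmall : ‖ctil - c‖ < (1 - β) *
      Metric.infDist Qstar
        {Q : S × A → ℝ | ∀ i : S, ∀ a : A, a ≠ wdag i → Q (i, wdag i) < Q (i, a)}) :
    Qtil ∉ {Q : S × A → ℝ | ∀ i : S, ∀ a : A, a ≠ wdag i → Q (i, wdag i) < Q (i, a)} := by
  intro hmem
  set V := {Q : S × A → ℝ | ∀ i : S, ∀ a : A, a ≠ wdag i → Q (i, wdag i) < Q (i, a)}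
  set D : S × A → ℝ := Qtil - Qstar with hD
  -- pointwise bound
  have key : ∀ x : S × A, |D x| ≤ ‖ctil - c‖ + β * ‖D‖ := by
    rintro ⟨i, a⟩
    have hDx : D (i, a) = (ctil - c) (i, a) +
        β * ∑ j, p i j a * ((⨅ b, Qtil (j, b)) - ⨅ b, Qstar (j, b)) := by
      have hsplit : ∑ j, p i j a * ((⨅ b, Qtil (j, b)) - ⨅ b, Qstar (j, b))
          = (∑ j, p i j a * (⨅ b, Qtil (j, b))) - ∑ j, p i j a * (⨅ b, Qstar (j, b)) := by
        rw [← Finset.sum_sub_distrib]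
        exact Finset.sum_congr rfl fun j _ => by ring
      simp only [hD, Pi.sub_apply]
      rw [hQt i a, hQ i a, hsplit]
      ring
    have hsum : |∑ j, p i j a * ((⨅ b, Qtil (j, b)) - ⨅ b, Qstar (j, b))| ≤ ‖D‖ := by
      calc |∑ j, p i j a * ((⨅ b, Qtil (j, b)) - ⨅ b, Qstar (j, b))|
          ≤ ∑ j, |p i j a * ((⨅ b, Qtil (j, b)) - ⨅ b, Qstar (j, b))| :=
            Finset.abs_sum_le_sum_abs _ _
        _ ≤ ∑ j, p i j a * ‖D‖ := by
            apply Finset.sum_le_sum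
            intro j _
            rw [abs_mul, abs_of_nonneg (hp0 i j a)]
            apply mul_le_mul_of_nonneg_left _ (hp0 i j a)
            apply inf_sub_inf_abs_le
            intro b
            have := norm_le_pi_norm D (j, b)
            simpa [hD, Real.norm_eq_abs] using this
        _ = ‖D‖ := by rw [← Finset.sum_mul, hp1, one_mul]
    calc |D (i, a)| ≤ |(ctil - c) (i, a)| +
          |β * ∑ j, p i j a * ((⨅ b, Qtil (j, b)) - ⨅ b, Qstar (j, b))| := by
            rw [hDx]; exact abs_add_le _ _
      _ ≤ ‖ctil - c‖ + β * ‖D‖ := by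
          have h1 : |(ctil - c) (i, a)| ≤ ‖ctil - c‖ := by
            simpa [Real.norm_eq_abs] using norm_le_pi_norm (ctil - c) (i, a)
          have h2 : |β * ∑ j, p i j a * ((⨅ b, Qtil (j, b)) - ⨅ b, Qstar (j, b))| ≤ β * ‖D‖ := by
            rw [abs_mul, abs_of_pos hβ0]
            exact mul_le_mul_of_nonneg_left hsum hβ0.le
          linarith
  have hnormD : ‖D‖ ≤ ‖ctil - c‖ + β * ‖D‖ := by
    apply pi_norm_le_iff_of_nonneg (by positivity) |>.2
    intro x
    simpa [Real.norm_eq_abs] using key x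
  have hbound : (1 - β) * ‖D‖ ≤ ‖ctil - c‖ := by nlinarith
  have hle : Metric.infDist Qstar V ≤ ‖D‖ := by
    have := Metric.infDist_le_dist_of_mem (x := Qstar) hmem
    rwa [dist_eq_norm, ← norm_neg, neg_sub] at this
  have : (1 - β) * Metric.infDist Qstar V ≤ (1 - β) * ‖D‖ :=
    mul_le_mul_of_nonneg_left hle (by linarith)
  linarith
end

section
/- Characterization of adversarially achievable policies (Theorem: falsified cost conditions): Let Q̃* be the Bellman fixed point of cost c̃. Then Q̃* ∈ V_{w†} if and only if for all i ∈ S and all a ∈ A with a ≠ w†(i), c̃(i,a) > (e_i − β P_{ia})ᵀ (I − β P_{w†})^{-1} c̃_{w†}, where e_i ∈ ℝ^S is the i-th standard basis vector, P_{ia} = (p(i,1,a),…,p(i,S,a))ᵀ, (P_{w†})_{ij} = p(i,j,w†(i)), and (c̃_{w†})_i = c̃(i, w†(i)). -/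
/-!
A row-stochastic matrix does not increase the sup norm and taking row minima is 1-Lipschitz, so
`βP_w` and the Bellman operator are `β`-contractions: `I - βP_w` is invertible and the Bellman fixed
point is unique. If `w` is strictly greedy for `Q̃*`, the Bellman equation along `w` says that
`Q̃*(·, w ·)` solves the policy-evaluation equation, hence equals `v = (I - βP_w)⁻¹ c̃_w`, and `Q̃*` is
the one-step lookahead of `v`. Conversely, if the lookahead of `v` is strictly greedy for `w`, it is a
Bellman fixed point and therefore equals `Q̃*`. Strict greediness of the lookahead of `v` at `(i, a)`
is exactly the stated cost inequality.
-/

open Finset Matrix Function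

section Stochastic

variable {S : Type*} [Fintype S]

lemma abs_sum_mul_le_norm {w : S → ℝ} (hw0 : ∀ j, 0 ≤ w j) (hw1 : ∑ j, w j = 1) (v : S → ℝ) :
    |∑ j, w j * v j| ≤ ‖v‖ :=
  calc |∑ j, w j * v j| ≤ ∑ j, w j * ‖v‖ := by
        refine (abs_sum_le_sum_abs _ _).trans (sum_le_sum fun j _ => ?_)
        rw [abs_mul, abs_of_nonneg (hw0 j)]
        exact mul_le_mul_of_nonneg_left (norm_le_pi_norm v j) (hw0 j)
    _ = ‖v‖ := by rw [← sum_mul, hw1, one_mul]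

variable [DecidableEq S]

lemma Matrix.norm_mulVec_le_of_mem_rowStochastic {P : Matrix S S ℝ} (hP : P ∈ rowStochastic ℝ S)
    (v : S → ℝ) : ‖P *ᵥ v‖ ≤ ‖v‖ :=
  (pi_norm_le_iff_of_nonneg (norm_nonneg v)).2 fun i =>
    abs_sum_mul_le_norm (fun _ => nonneg_of_mem_rowStochastic hP)
      (sum_row_of_mem_rowStochastic hP i) v

lemma Matrix.isUnit_one_sub_smul_of_mem_rowStochastic {P : Matrix S S ℝ}
    (hP : P ∈ rowStochastic ℝ S) {β : ℝ} (hβ0 : 0 ≤ β) (hβ1 : β < 1) : IsUnit (1 - β • P) := by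
  refine mulVec_injective_iff_isUnit.1 fun u u' huu' => sub_eq_zero.1 ?_
  set d := u - u'
  have hd : d = β • P *ᵥ d := by
    have : (1 - β • P) *ᵥ d = 0 := by rw [mulVec_sub, huu', sub_self]
    rwa [sub_mulVec, one_mulVec, smul_mulVec, sub_eq_zero] at this
  have : ‖d‖ ≤ β * ‖d‖ :=
    calc ‖d‖ = β * ‖P *ᵥ d‖ := by rw [← Real.norm_of_nonneg hβ0, ← norm_smul, ← hd]
      _ ≤ β * ‖d‖ := mul_le_mul_of_nonneg_left (P.norm_mulVec_le_of_mem_rowStochastic hP d) hβ0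
  exact norm_le_zero_iff.1 (by nlinarith [norm_nonneg d])

lemma Matrix.eq_inv_mulVec_iff {R : Type*} [CommRing R] {A : Matrix S S R} (hA : IsUnit A)
    {u c : S → R} :
    u = A⁻¹ *ᵥ c ↔ A *ᵥ u = c := by
  have hdet := (isUnit_iff_isUnit_det A).1 hA
  constructor
  · rintro rfl
    rw [mulVec_mulVec, mul_nonsing_inv A hdet, one_mulVec]
  · rintro rfl
    rw [mulVec_mulVec, nonsing_inv_mul A hdet, one_mulVec]

end Stochastic

lemma ciInf_sub_ciInf_le_norm {ι : Type*} [Fintype ι] (f g : ι → ℝ) :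
    (⨅ i, f i) - ⨅ i, g i ≤ ‖f - g‖ := by
  rcases isEmpty_or_nonempty ι with hι | hι
  · simp
  rw [sub_le_comm]
  refine le_ciInf fun i => ?_
  have hfg : f i - g i ≤ ‖f - g‖ := (le_abs_self _).trans (norm_le_pi_norm (f - g) i)
  linarith [ciInf_le (Finite.bddBelow_range f) i]

lemma abs_ciInf_sub_ciInf_le_norm {ι : Type*} [Fintype ι] (f g : ι → ℝ) :
    |(⨅ i, f i) - ⨅ i, g i| ≤ ‖f - g‖ :=
  abs_sub_le_iff.2 ⟨ciInf_sub_ciInf_le_norm f g, norm_sub_rev f g ▸ ciInf_sub_ciInf_le_norm g f⟩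

section MDP

variable {S A : Type*} [Fintype S] (p : S → S → A → ℝ) (β : ℝ) (c : S × A → ℝ)

def lookahead (v : S → ℝ) : S × A → ℝ :=
  fun x => c x + β * ∑ j, p x.1 j x.2 * v j

noncomputable def bellmanOp (Q : S × A → ℝ) : S × A → ℝ :=
  lookahead p β c fun j => ⨅ b, Q (j, b)

/-- `Q ∈ V_w`: the policy `w` is the unique greedy policy of `Q`. -/
def IsStrictlyGreedy (Q : S × A → ℝ) (w : S → A) : Prop :=
  ∀ i a, a ≠ w i → Q (i, w i) < Q (i, a)

variable {p β}

lemma lookahead_policy_eq_iff [DecidableEq S] {Pw : Matrix S S ℝ} {w : S → A}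
    (hPw : ∀ i j, Pw i j = p i j (w i)) (hU : IsUnit (1 - β • Pw)) (u : S → ℝ) :
    (fun i => lookahead p β c u (i, w i)) = u ↔ u = (1 - β • Pw)⁻¹ *ᵥ fun i => c (i, w i) := by
  have h : (fun i => lookahead p β c u (i, w i)) = (fun i => c (i, w i)) + β • Pw *ᵥ u := by
    ext i
    simp [lookahead, mulVec, dotProduct, hPw]
  rw [h, eq_inv_mulVec_iff hU, sub_mulVec, one_mulVec, smul_mulVec, sub_eq_iff_eq_add, eq_comm]

variable [Fintype A]

lemma norm_lookahead_sub_le (hp0 : ∀ i j a, 0 ≤ p i j a) (hp1 : ∀ i a, ∑ j, p i j a = 1)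
    (hβ : 0 ≤ β) (v v' : S → ℝ) :
    ‖lookahead p β c v - lookahead p β c v'‖ ≤ β * ‖v - v'‖ := by
  refine (pi_norm_le_iff_of_nonneg (by positivity)).2 fun ⟨i, a⟩ => ?_
  have hdiff : lookahead p β c v (i, a) - lookahead p β c v' (i, a) =
      β * ∑ j, p i j a * (v - v') j := by
    simp only [lookahead, Pi.sub_apply, mul_sub, sum_sub_distrib]
    ring
  rw [Pi.sub_apply, hdiff, Real.norm_eq_abs, abs_mul, abs_of_nonneg hβ]
  exact mul_le_mul_of_nonneg_left (abs_sum_mul_le_norm (hp0 i · a) (hp1 i a) _) hβ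

lemma norm_bellmanOp_sub_le (hp0 : ∀ i j a, 0 ≤ p i j a) (hp1 : ∀ i a, ∑ j, p i j a = 1)
    (hβ : 0 ≤ β) (Q Q' : S × A → ℝ) :
    ‖bellmanOp p β c Q - bellmanOp p β c Q'‖ ≤ β * ‖Q - Q'‖ := by
  refine (norm_lookahead_sub_le c hp0 hp1 hβ _ _).trans (mul_le_mul_of_nonneg_left ?_ hβ)
  refine (pi_norm_le_iff_of_nonneg (norm_nonneg _)).2 fun j => ?_
  refine (abs_ciInf_sub_ciInf_le_norm _ _).trans ?_
  exact (pi_norm_le_iff_of_nonneg (norm_nonneg _)).2 fun b => norm_le_pi_norm (Q - Q') (j, b)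

lemma bellmanOp_fixedPt_unique (hp0 : ∀ i j a, 0 ≤ p i j a) (hp1 : ∀ i a, ∑ j, p i j a = 1)
    (hβ0 : 0 ≤ β) (hβ1 : β < 1) {Q Q' : S × A → ℝ} (hQ : IsFixedPt (bellmanOp p β c) Q)
    (hQ' : IsFixedPt (bellmanOp p β c) Q') : Q = Q' := by
  have h := norm_bellmanOp_sub_le c hp0 hp1 hβ0 Q Q'
  rw [hQ.eq, hQ'.eq] at h
  exact sub_eq_zero.1 (norm_le_zero_iff.1 (by nlinarith [norm_nonneg (Q - Q')]))

lemma IsStrictlyGreedy.bellmanOp_eq {Q : S × A → ℝ} {w : S → A} (hQ : IsStrictlyGreedy Q w) :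
    bellmanOp p β c Q = lookahead p β c fun j => Q (j, w j) := by
  refine congrArg (lookahead p β c) (funext fun j => ?_)
  have : Nonempty A := ⟨w j⟩
  refine le_antisymm (ciInf_le (Finite.bddBelow_range _) (w j)) (le_ciInf fun b => ?_)
  rcases eq_or_ne b (w j) with rfl | hb
  · exact le_rfl
  · exact (hQ j b hb).le

lemma IsStrictlyGreedy.eq_lookahead_of_isFixedPt [DecidableEq S] {Q : S × A → ℝ} {w : S → A}
    (hG : IsStrictlyGreedy Q w) (hQ : IsFixedPt (bellmanOp p β c) Q) {Pw : Matrix S S ℝ}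
    (hPw : ∀ i j, Pw i j = p i j (w i)) (hU : IsUnit (1 - β • Pw)) :
    Q = lookahead p β c ((1 - β • Pw)⁻¹ *ᵥ fun i => c (i, w i)) := by
  have hQ' : Q = lookahead p β c fun j => Q (j, w j) := hQ.symm.trans (hG.bellmanOp_eq c)
  have hu := (lookahead_policy_eq_iff c hPw hU _).1 (funext fun i => (congrFun hQ' (i, w i)).symm)
  rwa [hu] at hQ'

lemma IsStrictlyGreedy.isFixedPt_bellmanOp {v : S → ℝ} {w : S → A}
    (hG : IsStrictlyGreedy (lookahead p β c v) w)
    (hv : (fun i => lookahead p β c v (i, w i)) = v) :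
    IsFixedPt (bellmanOp p β c) (lookahead p β c v) :=
  (hG.bellmanOp_eq c).trans (by rw [hv])

end MDP

theorem achievable_policy_iff_general {S A : Type*} [Fintype S] [DecidableEq S] [Fintype A]
    (p : S → S → A → ℝ) (hp0 : ∀ i j a, 0 ≤ p i j a) (hp1 : ∀ i a, ∑ j, p i j a = 1)
    (β : ℝ) (hβ0 : 0 < β) (hβ1 : β < 1) (wdag : S → A) (ctil : S × A → ℝ)
    (Qtil : S × A → ℝ)
    (hQt : ∀ i a, Qtil (i, a) = ctil (i, a) + β * ∑ j, p i j a * (⨅ b, Qtil (j, b)))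
    (Pw : Matrix S S ℝ) (hPw : ∀ i j, Pw i j = p i j (wdag i)) :
    (∀ i : S, ∀ a : A, a ≠ wdag i → Qtil (i, wdag i) < Qtil (i, a)) ↔
      (∀ i : S, ∀ a : A, a ≠ wdag i →
        ctil (i, a) >
          ((1 - β • Pw)⁻¹.mulVec (fun k => ctil (k, wdag k))) i -
            β * ∑ j, p i j a * ((1 - β • Pw)⁻¹.mulVec (fun k => ctil (k, wdag k))) j) := by
  have hPw_mem : Pw ∈ rowStochastic ℝ S := mem_rowStochastic_iff_sum.2
    ⟨fun i j => hPw i j ▸ hp0 i j (wdag i), fun i => by simpa only [hPw] using hp1 i (wdag i)⟩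
  have hU := isUnit_one_sub_smul_of_mem_rowStochastic hPw_mem hβ0.le hβ1
  have hfix : IsFixedPt (bellmanOp p β ctil) Qtil := funext fun x => (hQt x.1 x.2).symm
  set v := (1 - β • Pw)⁻¹ *ᵥ fun k => ctil (k, wdag k)
  have hv : (fun i => lookahead p β ctil v (i, wdag i)) = v :=
    (lookahead_policy_eq_iff ctil hPw hU v).2 rfl
  trans IsStrictlyGreedy (lookahead p β ctil v) wdag
  · refine ⟨fun (hG : IsStrictlyGreedy Qtil wdag) => ?_, fun hG => ?_⟩
    · rwa [← hG.eq_lookahead_of_isFixedPt ctil hfix hPw hU]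
    · rwa [bellmanOp_fixedPt_unique ctil hp0 hp1 hβ0.le hβ1 hfix (hG.isFixedPt_bellmanOp ctil hv)]
  · refine forall₂_congr fun i a => imp_congr_right fun _ => ?_
    rw [← congrFun hv i, lookahead, lookahead]
    exact sub_lt_iff_lt_add.symm

theorem achievable_policy_iff {S A : Type*} [Fintype S] [DecidableEq S] [Fintype A]
    [Nonempty S] [Nonempty A]
    (p : S → S → A → ℝ) (hp0 : ∀ i j a, 0 ≤ p i j a) (hp1 : ∀ i a, ∑ j, p i j a = 1)
    (β : ℝ) (hβ0 : 0 < β) (hβ1 : β < 1) (wdag : S → A) (ctil : S × A → ℝ)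
    (Qtil : S × A → ℝ)
    (hQt : ∀ i a, Qtil (i, a) = ctil (i, a) + β * ∑ j, p i j a * (⨅ b, Qtil (j, b)))
    (Pw : Matrix S S ℝ) (hPw : ∀ i j, Pw i j = p i j (wdag i)) :
    (∀ i : S, ∀ a : A, a ≠ wdag i → Qtil (i, wdag i) < Qtil (i, a)) ↔
      (∀ i : S, ∀ a : A, a ≠ wdag i →
        ctil (i, a) >
          ((1 - β • Pw)⁻¹.mulVec (fun k => ctil (k, wdag k))) i -
            β * ∑ j, p i j a * ((1 - β • Pw)⁻¹.mulVec (fun k => ctil (k, wdag k))) j) :=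
  achievable_policy_iff_general p hp0 hp1 β hβ0 hβ1 wdag ctil Qtil hQt Pw hPw
end

section
/- Local affine structure of c ↦ Q*: Let w be a policy and suppose c and c̃ = c + h are costs whose Bellman fixed points Q* and Q̃* both lie in V_w. Then for all i ∈ S and a ∈ A, Q̃*(i,a) = Q*(i,a) + β P_{ia}ᵀ (I − βP_w)^{-1} h_w + h(i,a), where (h_w)_i = h(i, w(i)). -/
open Finset Matrix

private lemma my_inf_eq_min' {A : Type*} [Fintype A] [Nonempty A] (f : A → ℝ) (a0 : A)
    (hmin : ∀ a, a ≠ a0 → f a0 < f a) : (⨅ b, f b) = f a0 := by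
  apply le_antisymm
  · exact ciInf_le (Set.Finite.bddBelow (Set.finite_range f)) a0
  · apply le_ciInf
    intro b
    by_cases hb : b = a0
    · subst hb; exact le_refl _
    · exact (hmin b hb).le

theorem local_affine_structure {S A : Type*} [Fintype S] [DecidableEq S] [Fintype A]
    [Nonempty S] [Nonempty A]
    (p : S → S → A → ℝ) (hp0 : ∀ i j a, 0 ≤ p i j a) (hp1 : ∀ i a, ∑ j, p i j a = 1)
    (β : ℝ) (hβ0 : 0 < β) (hβ1 : β < 1) (w : S → A) (c h : S × A → ℝ)
    (Qstar Qtil : S × A → ℝ)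
    (hQ : ∀ i a, Qstar (i, a) = c (i, a) + β * ∑ j, p i j a * (⨅ b, Qstar (j, b)))
    (hQt : ∀ i a, Qtil (i, a) = (c (i, a) + h (i, a)) + β * ∑ j, p i j a * (⨅ b, Qtil (j, b)))
    (hQV : ∀ i : S, ∀ a : A, a ≠ w i → Qstar (i, w i) < Qstar (i, a))
    (hQtV : ∀ i : S, ∀ a : A, a ≠ w i → Qtil (i, w i) < Qtil (i, a))
    (Pw : Matrix S S ℝ) (hPw : ∀ i j, Pw i j = p i j (w i)) :
    ∀ i a, Qtil (i, a) = Qstar (i, a) +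
      β * (∑ j, p i j a * ((1 - β • Pw)⁻¹.mulVec (fun k => h (k, w k))) j) + h (i, a) := by
  have hinf : ∀ j : S, (⨅ b, Qstar (j, b)) = Qstar (j, w j) := fun j =>
    my_inf_eq_min' (fun b => Qstar (j, b)) (w j) (hQV j)
  have hinft : ∀ j : S, (⨅ b, Qtil (j, b)) = Qtil (j, w j) := fun j =>
    my_inf_eq_min' (fun b => Qtil (j, b)) (w j) (hQtV j)
  set d : S → ℝ := fun j => Qtil (j, w j) - Qstar (j, w j) with hd
  set hw : S → ℝ := fun k => h (k, w k) with hhw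
  have expand : ∀ (v : S → ℝ) (i : S),
      (1 - β • Pw).mulVec v i = v i - β * ∑ j, Pw i j * v j := by
    intro v i
    rw [Matrix.sub_mulVec, Matrix.smul_mulVec, Matrix.one_mulVec]
    simp [Matrix.mulVec, dotProduct, Finset.mul_sum]
  have hdiff : ∀ i a, Qtil (i, a) - Qstar (i, a) = h (i, a) + β * ∑ j, p i j a * d j := by
    intro i a
    rw [hQ i a, hQt i a]
    simp only [hinf, hinft]
    have hs : ∑ j, p i j a * d j
        = ∑ j, p i j a * Qtil (j, w j) - ∑ j, p i j a * Qstar (j, w j) := by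
      rw [← Finset.sum_sub_distrib]
      apply Finset.sum_congr rfl
      intro j _
      simp only [hd]
      ring
    rw [hs]
    ring
  have hsys : (1 - β • Pw).mulVec d = hw := by
    funext i
    rw [expand]
    have h1 := hdiff i (w i)
    have h2 : ∑ j, Pw i j * d j = ∑ j, p i j (w i) * d j := by
      apply Finset.sum_congr rfl; intro j _; rw [hPw]
    rw [h2]
    simp only [hd, hhw] at h1 ⊢
    linarith [h1]
  have hunit : IsUnit (1 - β • Pw) := by
    rw [← Matrix.mulVec_injective_iff_isUnit]
    intro x y hxy
    have hz : (1 - β • Pw).mulVec (x - y) = 0 := by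
      rw [Matrix.mulVec_sub, hxy, sub_self]
    set z := x - y with hzdef
    have hz' : ∀ i, z i = β * ∑ j, Pw i j * z j := by
      intro i
      have := congrFun hz i
      rw [expand] at this
      simp only [Pi.zero_apply] at this
      linarith [this]
    obtain ⟨i0, -, hi0⟩ := Finset.exists_max_image (Finset.univ : Finset S)
      (fun i => |z i|) ⟨Classical.arbitrary S, Finset.mem_univ _⟩
    have hbound : |z i0| ≤ β * |z i0| := by
      calc |z i0| = β * |∑ j, Pw i0 j * z j| := by
            rw [hz' i0, abs_mul, abs_of_pos hβ0]
        _ ≤ β * ∑ j, Pw i0 j * |z i0| := by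
            apply mul_le_mul_of_nonneg_left _ hβ0.le
            calc |∑ j, Pw i0 j * z j| ≤ ∑ j, |Pw i0 j * z j| := Finset.abs_sum_le_sum_abs _ _
              _ ≤ ∑ j, Pw i0 j * |z i0| := by
                  apply Finset.sum_le_sum
                  intro j _
                  rw [abs_mul, abs_of_nonneg (by rw [hPw]; exact hp0 i0 j (w i0))]
                  exact mul_le_mul_of_nonneg_left (hi0 j (Finset.mem_univ j))
                    (by rw [hPw]; exact hp0 i0 j (w i0))
        _ = β * |z i0| := by
            rw [← Finset.sum_mul]
            congr 2
            have hone : ∑ j, Pw i0 j = 1 := by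
              simp only [hPw]; exact hp1 i0 (w i0)
            rw [hone, one_mul]
    have hzero : |z i0| = 0 := by nlinarith [abs_nonneg (z i0)]
    have hall : ∀ i, z i = 0 := by
      intro i
      have := hi0 i (Finset.mem_univ i)
      rw [hzero] at this
      exact abs_eq_zero.mp (le_antisymm this (abs_nonneg _))
    funext i
    have := hall i
    simpa [hzdef, sub_eq_zero] using this
  have hdsol : d = (1 - β • Pw)⁻¹.mulVec hw := by
    rw [← hsys, Matrix.mulVec_mulVec,
      Matrix.nonsing_inv_mul _ ((Matrix.isUnit_iff_isUnit_det _).mp hunit), Matrix.one_mulVec]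
  intro i a
  have h1 := hdiff i a
  simp only [hhw] at hdsol
  rw [← hdsol]
  linarith [h1]
end

section
/- Under the consistency condition c̃(i, w†(i)) = (e_i − βP_{i w†(i)})ᵀ (I − βP_{w†})^{-1} c̃_{w†} (which holds identically for a = w†(i)), if additionally the strict inequalities c̃(i,a) > (e_i − βP_{ia})ᵀ(I − βP_{w†})^{-1} c̃_{w†} hold for all i and all a ≠ w†(i), then the policy induced by the Bellman fixed point Q̃* of c̃ (i.e., the map i ↦ argmin_a Q̃*(i,a)) is exactly w†, and this argmin is unique at every state. -/
open Finset Matrix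

theorem induced_policy_is_target {S A : Type*} [Fintype S] [DecidableEq S] [Fintype A]
    [Nonempty S] [Nonempty A]
    (p : S → S → A → ℝ) (hp0 : ∀ i j a, 0 ≤ p i j a) (hp1 : ∀ i a, ∑ j, p i j a = 1)
    (β : ℝ) (hβ0 : 0 < β) (hβ1 : β < 1) (wdag : S → A) (ctil : S × A → ℝ)
    (Qtil : S × A → ℝ)
    (hQt : ∀ i a, Qtil (i, a) = ctil (i, a) + β * ∑ j, p i j a * (⨅ b, Qtil (j, b)))
    (Pw : Matrix S S ℝ) (hPw : ∀ i j, Pw i j = p i j (wdag i))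
    (hcons : ∀ i : S, ctil (i, wdag i) =
      ((1 - β • Pw)⁻¹.mulVec (fun k => ctil (k, wdag k))) i -
        β * ∑ j, p i j (wdag i) * ((1 - β • Pw)⁻¹.mulVec (fun k => ctil (k, wdag k))) j)
    (hstrict : ∀ i : S, ∀ a : A, a ≠ wdag i →
      ctil (i, a) >
        ((1 - β • Pw)⁻¹.mulVec (fun k => ctil (k, wdag k))) i -
          β * ∑ j, p i j a * ((1 - β • Pw)⁻¹.mulVec (fun k => ctil (k, wdag k))) j) :
    ∀ i : S, ∀ a : A, a ≠ wdag i → Qtil (i, wdag i) < Qtil (i, a) := by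
  classical
  set v : S → ℝ := (1 - β • Pw)⁻¹.mulVec (fun k => ctil (k, wdag k)) with hv
  set V : S → ℝ := fun i => ⨅ b, Qtil (i, b) with hV
  have hVdef : ∀ j : S, (⨅ b, Qtil (j, b)) = V j := fun _ => rfl
  have hle : ∀ i b, V i ≤ Qtil (i, b) := fun i b =>
    ciInf_le (Finite.bddBelow_range _) b
  have hatt : ∀ i, ∃ b, V i = Qtil (i, b) := by
    intro i
    obtain ⟨b, hb⟩ := Finite.exists_min (fun b => Qtil (i, b))
    exact ⟨b, le_antisymm (hle i b) (le_ciInf hb)⟩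
  set g : S → ℝ := fun i => V i - v i with hg
  have hsum : ∀ i a, ∑ j, p i j a * V j = ∑ j, p i j a * v j + ∑ j, p i j a * g j := by
    intro i a
    rw [← Finset.sum_add_distrib]
    refine Finset.sum_congr rfl fun j _ => ?_
    simp only [hg]; ring
  have hQw : ∀ i, Qtil (i, wdag i) = v i + β * ∑ j, p i j (wdag i) * g j := by
    intro i
    rw [hQt]
    simp only [hVdef]
    rw [hcons i, hsum]
    ring
  have hQa : ∀ i a, a ≠ wdag i →
      Qtil (i, a) > v i + β * ∑ j, p i j a * g j := by
    intro i a ha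
    rw [hQt]
    simp only [hVdef]
    rw [hsum]
    have := hstrict i a ha
    nlinarith [this]
  -- generic bounds on ∑ p * g
  have hub : ∀ (i0 : S), (∀ j, g j ≤ g i0) → ∀ i a, ∑ j, p i j a * g j ≤ g i0 := by
    intro i0 h i a
    calc ∑ j, p i j a * g j ≤ ∑ j, p i j a * g i0 :=
          Finset.sum_le_sum fun j _ => mul_le_mul_of_nonneg_left (h j) (hp0 i j a)
      _ = g i0 := by rw [← Finset.sum_mul, hp1, one_mul]
  have hlb : ∀ (i1 : S), (∀ j, g i1 ≤ g j) → ∀ i a, g i1 ≤ ∑ j, p i j a * g j := by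
    intro i1 h i a
    calc g i1 = ∑ j, p i j a * g i1 := by rw [← Finset.sum_mul, hp1, one_mul]
      _ ≤ ∑ j, p i j a * g j :=
          Finset.sum_le_sum fun j _ => mul_le_mul_of_nonneg_left (h j) (hp0 i j a)
  obtain ⟨i0, hi0⟩ := Finite.exists_max g
  obtain ⟨i1, hi1⟩ := Finite.exists_min g
  have hM : g i0 ≤ 0 := by
    have h1 : V i0 ≤ Qtil (i0, wdag i0) := hle i0 _
    rw [hQw i0] at h1
    have h2 : ∑ j, p i0 j (wdag i0) * g j ≤ g i0 := hub i0 hi0 i0 (wdag i0)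
    have h3 : g i0 ≤ β * g i0 := by
      have : g i0 ≤ β * ∑ j, p i0 j (wdag i0) * g j := by
        simp only [hg]; linarith
      nlinarith
    nlinarith
  have hm : 0 ≤ g i1 := by
    obtain ⟨b, hb⟩ := hatt i1
    have h2 : g i1 ≤ ∑ j, p i1 j b * g j := hlb i1 hi1 i1 b
    have h3 : β * g i1 ≤ g i1 := by
      rcases eq_or_ne b (wdag i1) with hbw | hbw
      · rw [hbw] at hb h2
        have h5 := hQw i1
        rw [← hb] at h5
        have h6 : g i1 = β * ∑ j, p i1 j (wdag i1) * g j := by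
          simp only [hg]; linarith
        nlinarith [mul_le_mul_of_nonneg_left h2 hβ0.le]
      · have h5 := hQa i1 b hbw
        rw [← hb] at h5
        have h6 : β * ∑ j, p i1 j b * g j < g i1 := by
          simp only [hg]; linarith
        nlinarith [mul_le_mul_of_nonneg_left h2 hβ0.le]
    nlinarith
  have hzero : ∀ i, g i = 0 := by
    intro i
    have := hi0 i
    have := hi1 i
    have := hi1 i0
    linarith
  intro i a ha
  have h1 : Qtil (i, wdag i) = v i := by
    rw [hQw i]
    have : ∑ j, p i j (wdag i) * g j = 0 := by
      apply Finset.sum_eq_zero; intro j _; rw [hzero j, mul_zero]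
    rw [this]; ring
  have h2 : Qtil (i, a) > v i := by
    have := hQa i a ha
    have hs : ∑ j, p i j a * g j = 0 := by
      apply Finset.sum_eq_zero; intro j _; rw [hzero j, mul_zero]
    rw [hs] at this
    linarith
  rw [h1]; exact h2
end
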